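/- Let r, g_1, …, g_k be real polynomials in n variables and let K := {x ∈ ℝⁿ : g_1(x) ≥ 0, …, g_k(x) ≥ 0} be nonempty. Assume that for some index j₀ ∈ {1,…,k} and some real M > 0 one has g_{j₀}(x) = M − Σ_{i=1}^n x_i². Set g_0 := 1 and r* := inf{r(x) : x ∈ K}. For each natural number d, define the optimal value of the d-th Lasserre relaxation as p_d* := sup{μ ∈ ℝ : there exist sum-of-squares polynomials σ_0, …, σ_k with deg(σ_j g_j) ≤ 2d for all j = 0,…,k and r − μ = Σ_{j=0}^k σ_j g_j as polynomials} (a supremum in the extended reals, equal to −∞ when no such μ exists). Then the sequence (p_d*)_{d∈ℕ} is nondecreasing and converges to r*. -/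

import Mathlib

open MvPolynomial Filter

/-- A real polynomial is a sum of squares. -/
def IsSOS {n : ℕ} (p : MvPolynomial (Fin n) ℝ) : Prop :=
  ∃ (s : ℕ) (q : Fin s → MvPolynomial (Fin n) ℝ), p = ∑ i, q i ^ 2

/-!
A certificate `r - μ = σ₀ + ∑ σⱼ gⱼ` makes `r - μ` nonnegative on `K`, so every `p_d` is at most
`r*`, and raising `d` only enlarges the set of certificates. Conversely, for `μ < r*` the
polynomial `r - μ` is strictly positive on `K`, and Putinar's Positivstellensatz puts it into the
quadratic module `Q` generated by the `gⱼ`, i.e. gives a certificate of some degree.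

Putinar's theorem is proved in Jacobi's abstract form. The ball constraint makes `Q` Archimedean:
the elements bounded with respect to `Q` form a subalgebra containing every `Xᵢ`. If `a ∉ Q`, then
`Q - a Σ²` does not contain `-1` (a geometric series argument in the Archimedean module), so by
Zorn it lies in a maximal proper quadratic module `P`. This `P` is total, and
`x ↦ inf {r | r - x ∈ P}` is an `ℝ`-algebra homomorphism to `ℝ`, i.e. evaluation at a point of
`K`, where `a ≤ 0`.
-/

structure IsQuadraticModule {R : Type*} [CommRing R] (Q : Set R) : Prop where
  add_mem {a b : R} : a ∈ Q → b ∈ Q → a + b ∈ Q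
  one_mem : (1 : R) ∈ Q
  mul_self_mul_mem (a : R) {m : R} : m ∈ Q → a * a * m ∈ Q

namespace IsQuadraticModule

variable {R : Type*} [CommRing R] {Q : Set R}

theorem zero_mem (hQ : IsQuadraticModule Q) : (0 : R) ∈ Q := by
  simpa using hQ.mul_self_mul_mem 0 hQ.one_mem

theorem sq_mul_mem (hQ : IsQuadraticModule Q) (a : R) {m : R} (hm : m ∈ Q) : a ^ 2 * m ∈ Q := by
  simpa [sq] using hQ.mul_self_mul_mem a hm

theorem sq_mem (hQ : IsQuadraticModule Q) (a : R) : a ^ 2 ∈ Q := by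
  simpa using hQ.sq_mul_mem a hQ.one_mem

theorem isSumSq_mul_mem (hQ : IsQuadraticModule Q) {s m : R} (hs : IsSumSq s) (hm : m ∈ Q) :
    s * m ∈ Q := by
  induction hs with
  | zero => simpa using hQ.zero_mem
  | sq_add a _ ih => simpa [add_mul] using hQ.add_mem (hQ.mul_self_mul_mem a hm) ih

theorem isSumSq_mem (hQ : IsQuadraticModule Q) {s : R} (hs : IsSumSq s) : s ∈ Q := by
  simpa using hQ.isSumSq_mul_mem hs hQ.one_mem

end IsQuadraticModule

namespace QuadraticModule

variable {R : Type*} [CommRing R]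

def adjoin (Q : Set R) (a : R) : Set R :=
  {x | ∃ q ∈ Q, ∃ s, IsSumSq s ∧ x = q + s * a}

theorem subset_adjoin (Q : Set R) (a : R) : Q ⊆ adjoin Q a :=
  fun q hq => ⟨q, hq, 0, .zero, by simp⟩

theorem mem_adjoin_self {Q : Set R} (hQ : IsQuadraticModule Q) (a : R) : a ∈ adjoin Q a :=
  ⟨0, hQ.zero_mem, 1, .one, by simp⟩

theorem isQuadraticModule_adjoin {Q : Set R} (hQ : IsQuadraticModule Q) (a : R) :
    IsQuadraticModule (adjoin Q a) where
  add_mem := by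
    rintro _ _ ⟨q₁, hq₁, s₁, hs₁, rfl⟩ ⟨q₂, hq₂, s₂, hs₂, rfl⟩
    exact ⟨q₁ + q₂, hQ.add_mem hq₁ hq₂, s₁ + s₂, hs₁.add hs₂, by ring⟩
  one_mem := subset_adjoin Q a hQ.one_mem
  mul_self_mul_mem := by
    rintro b _ ⟨q, hq, s, hs, rfl⟩
    exact ⟨b * b * q, hQ.mul_self_mul_mem b hq, b * b * s, (IsSumSq.mul_self b).mul hs, by ring⟩

theorem exists_superset_maximal {Q : Set R} (hQ : IsQuadraticModule Q) (hQ₁ : (-1 : R) ∉ Q) :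
    ∃ P, Q ⊆ P ∧ Maximal (fun P => IsQuadraticModule P ∧ (-1 : R) ∉ P) P := by
  refine zorn_subset_nonempty _ (fun C hC hchain ⟨P₀, hP₀⟩ => ?_) Q ⟨hQ, hQ₁⟩
  refine ⟨⋃₀ C, ⟨⟨?_, ?_, ?_⟩, ?_⟩, fun P hP => Set.subset_sUnion_of_mem hP⟩
  · rintro a b ⟨P₁, hP₁, ha⟩ ⟨P₂, hP₂, hb⟩
    rcases hchain.total hP₁ hP₂ with h | h
    · exact ⟨P₂, hP₂, (hC hP₂).1.add_mem (h ha) hb⟩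
    · exact ⟨P₁, hP₁, (hC hP₁).1.add_mem ha (h hb)⟩
  · exact ⟨P₀, hP₀, (hC hP₀).1.one_mem⟩
  · rintro a m ⟨P₁, hP₁, hm⟩
    exact ⟨P₁, hP₁, (hC hP₁).1.mul_self_mul_mem a hm⟩
  · rintro ⟨P₁, hP₁, h⟩
    exact (hC hP₁).2 h

end QuadraticModule

open scoped algebraMap

@[simp, norm_cast]
theorem algebraMap.coe_ofNat {R A : Type*} [CommSemiring R] [Semiring A] [Algebra R A] (m : ℕ)
    [m.AtLeastTwo] : ((ofNat(m) : R) : A) = ofNat(m) :=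
  map_ofNat (algebraMap R A) m

theorem algebraMap.coe_inv_mul_cancel {K A : Type*} [Field K] [Semiring A] [Algebra K A] {c : K}
    (hc : c ≠ 0) : ((c⁻¹ : K) : A) * (c : A) = 1 := by
  rw [← algebraMap.coe_mul, inv_mul_cancel₀ hc, algebraMap.coe_one]

section RealAlgebra

variable {A : Type*} [CommRing A] [Algebra ℝ A] {Q : Set A}

namespace IsQuadraticModule

theorem algebraMap_mul_mem (hQ : IsQuadraticModule Q) {c : ℝ} (hc : 0 ≤ c) {m : A}
    (hm : m ∈ Q) : (c : A) * m ∈ Q := by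
  have := hQ.mul_self_mul_mem (√c : A) hm
  rwa [← algebraMap.coe_mul, Real.mul_self_sqrt hc] at this

theorem algebraMap_mem (hQ : IsQuadraticModule Q) {c : ℝ} (hc : 0 ≤ c) : (c : A) ∈ Q := by
  simpa using hQ.algebraMap_mul_mem hc hQ.one_mem

theorem nonneg_of_algebraMap_mem (hQ : IsQuadraticModule Q) (hQ₁ : (-1 : A) ∉ Q) {c : ℝ}
    (hc : (c : A) ∈ Q) : 0 ≤ c := by
  by_contra! hneg
  refine hQ₁ ?_
  have := hQ.algebraMap_mul_mem (c := -c⁻¹) (by simpa using hneg.le) hc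
  rwa [← algebraMap.coe_mul, neg_mul, inv_mul_cancel₀ hneg.ne, algebraMap.coe_neg,
    algebraMap.coe_one] at this

end IsQuadraticModule

namespace QuadraticModule

def IsBoundedBy (Q : Set A) (c : ℝ) (x : A) : Prop :=
  (c : A) - x ∈ Q ∧ (c : A) + x ∈ Q

def IsArchimedean (Q : Set A) : Prop :=
  ∀ x : A, ∃ c : ℝ, IsBoundedBy Q c x

def IsInfinitesimal (Q : Set A) (x : A) : Prop :=
  ∀ ε : ℝ, 0 < ε → IsBoundedBy Q ε x

namespace IsBoundedBy

variable {c d : ℝ} {x y : A}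

theorem neg (h : IsBoundedBy Q c x) : IsBoundedBy Q c (-x) := by
  simpa [IsBoundedBy, sub_eq_add_neg, and_comm] using h

theorem mono (hQ : IsQuadraticModule Q) (h : IsBoundedBy Q c x) (hcd : c ≤ d) :
    IsBoundedBy Q d x := by
  have hd : ((d - c : ℝ) : A) ∈ Q := hQ.algebraMap_mem (sub_nonneg.2 hcd)
  constructor
  · convert hQ.add_mem h.1 hd using 1; push_cast; ring
  · convert hQ.add_mem h.2 hd using 1; push_cast; ring

theorem add (hQ : IsQuadraticModule Q) (hx : IsBoundedBy Q c x) (hy : IsBoundedBy Q d y) :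
    IsBoundedBy Q (c + d) (x + y) := by
  constructor
  · convert hQ.add_mem hx.1 hy.1 using 1; push_cast; ring
  · convert hQ.add_mem hx.2 hy.2 using 1; push_cast; ring

theorem algebraMap_mul (hQ : IsQuadraticModule Q) (h : IsBoundedBy Q c x) (r : ℝ) :
    IsBoundedBy Q (|r| * c) (r * x) := by
  rcases le_total 0 r with hr | hr
  · rw [abs_of_nonneg hr]
    constructor
    · convert hQ.algebraMap_mul_mem hr h.1 using 1; push_cast; ring
    · convert hQ.algebraMap_mul_mem hr h.2 using 1; push_cast; ring
  · rw [abs_of_nonpos hr]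
    constructor
    · convert hQ.algebraMap_mul_mem (neg_nonneg.2 hr) h.2 using 1; push_cast; ring
    · convert hQ.algebraMap_mul_mem (neg_nonneg.2 hr) h.1 using 1; push_cast; ring

theorem algebraMap_sq_sub_sq_mem (hQ : IsQuadraticModule Q) (h : IsBoundedBy Q c x)
    (hc : 0 < c) : ((c ^ 2 : ℝ) : A) - x ^ 2 ∈ Q := by
  -- `2c (c² - x²) = (c + x)² (c - x) + (c - x)² (c + x)`
  convert hQ.algebraMap_mul_mem (c := (2 * c)⁻¹) (by positivity)
    (hQ.add_mem (hQ.sq_mul_mem (c + x) h.1) (hQ.sq_mul_mem (c - x) h.2)) using 1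
  have := algebraMap.coe_inv_mul_cancel (A := A) (mul_ne_zero two_ne_zero hc.ne')
  push_cast at this ⊢
  linear_combination (-(c : A) ^ 2 + x ^ 2) * this

theorem mul (hQ : IsQuadraticModule Q) (hx : IsBoundedBy Q c x) (hy : IsBoundedBy Q d y)
    (hc : 0 < c) (hd : 0 < d) : IsBoundedBy Q ((c ^ 2 + d ^ 2) / 2) (x * y) := by
  have h := hQ.add_mem (hx.algebraMap_sq_sub_sq_mem hQ hc) (hy.algebraMap_sq_sub_sq_mem hQ hd)
  have h2 := algebraMap.coe_inv_mul_cancel (A := A) (two_ne_zero : (2 : ℝ) ≠ 0)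
  rw [div_eq_inv_mul]
  constructor
  · convert hQ.algebraMap_mul_mem (c := 2⁻¹) (by norm_num) (hQ.add_mem h (hQ.sq_mem (x - y)))
      using 1
    push_cast at h2 ⊢
    linear_combination (x * y) * h2
  · convert hQ.algebraMap_mul_mem (c := 2⁻¹) (by norm_num) (hQ.add_mem h (hQ.sq_mem (x + y)))
      using 1
    push_cast at h2 ⊢
    linear_combination (-(x * y)) * h2

end IsBoundedBy

theorem isBoundedBy_algebraMap (hQ : IsQuadraticModule Q) (r : ℝ) :
    IsBoundedBy Q |r| (r : A) := by
  constructor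
  · rw [← algebraMap.coe_sub]; exact hQ.algebraMap_mem (by linarith [le_abs_self r])
  · rw [← algebraMap.coe_add]; exact hQ.algebraMap_mem (by linarith [neg_abs_le r])

def boundedSubalgebra (hQ : IsQuadraticModule Q) : Subalgebra ℝ A where
  carrier := {x | ∃ c, IsBoundedBy Q c x}
  mul_mem' := by
    rintro x y ⟨c, hx⟩ ⟨d, hy⟩
    exact ⟨_, (hx.mono hQ (le_max_left c 1)).mul hQ (hy.mono hQ (le_max_left d 1))
      (by positivity) (by positivity)⟩
  add_mem' := by
    rintro x y ⟨c, hx⟩ ⟨d, hy⟩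
    exact ⟨_, hx.add hQ hy⟩
  algebraMap_mem' r := ⟨_, isBoundedBy_algebraMap hQ r⟩

theorem isArchimedean_of_adjoin_eq_top (hQ : IsQuadraticModule Q) {s : Set A}
    (hs : Algebra.adjoin ℝ s = ⊤) (hbdd : ∀ x ∈ s, ∃ c, IsBoundedBy Q c x) :
    IsArchimedean Q := fun _ =>
  (hs ▸ Algebra.adjoin_le (S := boundedSubalgebra hQ) hbdd) Algebra.mem_top

theorem IsArchimedean.mono {P : Set A} (hQ : IsArchimedean Q) (hQP : Q ⊆ P) :
    IsArchimedean P := fun x =>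
  let ⟨c, hc⟩ := hQ x
  ⟨c, hQP hc.1, hQP hc.2⟩

theorem IsArchimedean.exists_ge (harch : IsArchimedean Q) (hQ : IsQuadraticModule Q) (x : A)
    (b : ℝ) : ∃ c ≥ b, IsBoundedBy Q c x :=
  let ⟨c, hc⟩ := harch x
  ⟨max c b, le_max_right c b, hc.mono hQ (le_max_left c b)⟩

namespace IsInfinitesimal

variable {x y : A}

theorem zero (hQ : IsQuadraticModule Q) : IsInfinitesimal Q (0 : A) := fun _ hε => by
  simpa [IsBoundedBy] using hQ.algebraMap_mem hε.le

theorem neg (h : IsInfinitesimal Q x) : IsInfinitesimal Q (-x) := fun ε hε => (h ε hε).neg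

theorem add (hQ : IsQuadraticModule Q) (hx : IsInfinitesimal Q x) (hy : IsInfinitesimal Q y) :
    IsInfinitesimal Q (x + y) := fun ε hε => by
  simpa using (hx (ε / 2) (by positivity)).add hQ (hy (ε / 2) (by positivity))

theorem algebraMap_mul (hQ : IsQuadraticModule Q) (h : IsInfinitesimal Q x) (r : ℝ) :
    IsInfinitesimal Q (r * x) := fun ε hε => by
  refine ((h (ε / (|r| + 1)) (by positivity)).algebraMap_mul hQ r).mono hQ ?_
  calc |r| * (ε / (|r| + 1)) ≤ (|r| + 1) * (ε / (|r| + 1)) := by gcongr; linarith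
    _ = ε := by field_simp

theorem mul (hQ : IsQuadraticModule Q) (hx : IsInfinitesimal Q x) (hy : IsInfinitesimal Q y) :
    IsInfinitesimal Q (x * y) := fun ε hε => by
  have hε' : 0 < √ε := Real.sqrt_pos.2 hε
  simpa [Real.sq_sqrt hε.le] using (hx √ε hε').mul hQ (hy √ε hε') hε' hε'

theorem eq_zero_of_algebraMap (hQ : IsQuadraticModule Q) (hQ₁ : (-1 : A) ∉ Q) {r : ℝ}
    (h : IsInfinitesimal Q (r : A)) : r = 0 := by
  by_contra hr
  obtain ⟨h₁, h₂⟩ := h (|r| / 2) (by positivity)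
  rw [← algebraMap.coe_sub] at h₁
  rw [← algebraMap.coe_add] at h₂
  have := hQ.nonneg_of_algebraMap_mem hQ₁ h₁
  have := hQ.nonneg_of_algebraMap_mem hQ₁ h₂
  have := abs_pos.2 hr
  cases abs_cases r <;> linarith

end IsInfinitesimal

theorem eq_of_isInfinitesimal_sub (hQ : IsQuadraticModule Q) (hQ₁ : (-1 : A) ∉ Q) {x : A}
    {r s : ℝ} (hr : IsInfinitesimal Q (x - r)) (hs : IsInfinitesimal Q (x - s)) : r = s := by
  have := IsInfinitesimal.eq_zero_of_algebraMap hQ hQ₁ (r := r - s)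
    (by convert hr.neg.add hQ hs using 1; push_cast; ring)
  linarith

theorem nonneg_of_isInfinitesimal_sub (hQ : IsQuadraticModule Q) (hQ₁ : (-1 : A) ∉ Q) {x : A}
    {r : ℝ} (hx : x ∈ Q) (h : IsInfinitesimal Q (x - r)) : 0 ≤ r := by
  by_contra! hr
  have := hQ.nonneg_of_algebraMap_mem hQ₁ (c := -r / 2 + r)
    (by convert hQ.add_mem (h (-r / 2) (by linarith)).1 hx using 1; push_cast; ring)
  linarith

theorem algebraMap_pow_sub_sq_pow_mem (hQ : IsQuadraticModule Q) {θ : ℝ} (hθ : 0 ≤ θ) {w : A}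
    (h : (θ : A) - w ^ 2 ∈ Q) (k : ℕ) : ((θ ^ k : ℝ) : A) - (w ^ k) ^ 2 ∈ Q := by
  induction k with
  | zero => simpa using hQ.zero_mem
  | succ k ih =>
    convert hQ.add_mem (hQ.algebraMap_mul_mem hθ ih) (hQ.sq_mul_mem (w ^ k) h) using 1
    push_cast; ring

theorem sub_sq_pow_mul_sub_mem (hQ : IsQuadraticModule Q) {δ : ℝ} (hδ : 0 ≤ δ) {a w : A}
    (h : a - w ^ 2 * a - δ ∈ Q) (k : ℕ) : a - (w ^ (k + 1)) ^ 2 * a - δ ∈ Q := by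
  induction k with
  | zero => simpa using h
  | succ k ih =>
    convert hQ.add_mem (hQ.add_mem ih (hQ.sq_mul_mem (w ^ (k + 1)) h))
      (hQ.algebraMap_mul_mem hδ (hQ.sq_mem (w ^ (k + 1)))) using 1
    ring

theorem mem_of_sub_sq_mul_sub_mem (hQ : IsQuadraticModule Q) {a w : A} {c δ θ : ℝ}
    (hc : 0 ≤ c) (hδ : 0 < δ) (hθ₀ : 0 ≤ θ) (hθ₁ : θ < 1) (ha : (c : A) + a ∈ Q)
    (hw : (θ : A) - w ^ 2 ∈ Q) (haw : a - w ^ 2 * a - δ ∈ Q) : a ∈ Q := by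
  -- `a ≥ w^(2k) a + δ`, `w^(2k) ≤ θ^k` and `a ≥ -c` give `a ≥ δ - c θ^k`
  obtain ⟨k, hk⟩ : ∃ k : ℕ, c * θ ^ (k + 1) < δ := by
    obtain ⟨k, hk⟩ := exists_pow_lt_of_lt_one (div_pos hδ (by positivity : 0 < c + 1)) hθ₁
    refine ⟨k, lt_of_le_of_lt ?_ ((lt_div_iff₀' (by positivity)).1 hk)⟩
    exact mul_le_mul (by linarith) (pow_le_pow_of_le_one hθ₀ hθ₁.le k.le_succ) (by positivity)
      (by positivity)
  convert hQ.add_mem (hQ.add_mem (hQ.add_mem (sub_sq_pow_mul_sub_mem hQ hδ.le haw k)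
    (hQ.sq_mul_mem (w ^ (k + 1)) ha))
    (hQ.algebraMap_mul_mem hc (algebraMap_pow_sub_sq_pow_mem hQ hθ₀ hw (k + 1))))
    (hQ.algebraMap_mem (sub_nonneg.2 hk.le)) using 1
  push_cast; ring

theorem mem_of_mul_eq_one_add (hQ : IsQuadraticModule Q) (harch : IsArchimedean Q) {a s m : A}
    (hs : IsSumSq s) (hm : m ∈ Q) (h : a * s = 1 + m) : a ∈ Q := by
  obtain ⟨c, hc1, hc⟩ := harch.exists_ge hQ a 1
  obtain ⟨ν, hν1, hν⟩ := harch.exists_ge hQ s 1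
  obtain ⟨γ, hγ0, hγ⟩ := harch.exists_ge hQ m 0
  -- for small `t > 0`, `w = 1 - t s` satisfies `w² ≤ θ < 1` and `a - w² a ≥ t`
  set t := (c * ν ^ 2 * (1 + γ))⁻¹ with ht
  set u := c⁻¹ with hu
  have ht0 : 0 < t := by positivity
  have hu0 : 0 < u := by positivity
  have hu1 : u ≤ 1 := inv_le_one_of_one_le₀ hc1
  have hcu : (u : A) * c = 1 := algebraMap.coe_inv_mul_cancel (by positivity)
  have htu : t * ν ^ 2 * (1 + γ) = u := by
    rw [ht, hu]; field_simp
  have htν : t * ν ^ 2 ≤ u := by nlinarith [mul_nonneg (mul_nonneg ht0.le (sq_nonneg ν)) hγ0]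
  have htγ : t * ν * (1 + γ) ≤ 1 := by
    have : 0 ≤ t * ν * (1 + γ) := mul_nonneg (mul_nonneg ht0.le (by linarith)) (by linarith)
    nlinarith [mul_le_mul_of_nonneg_left hν1 this]
  refine mem_of_sub_sq_mul_sub_mem hQ (by positivity) ht0 (w := 1 - t * s)
    (θ := 1 - 2 * t * u + t ^ 2 * ν ^ 2) ?_ ?_ hc.2 ?_ ?_
  · nlinarith [sq_nonneg (1 - t * u), mul_nonneg (sq_nonneg t) (sq_nonneg (ν - u)),
      mul_nonneg (mul_nonneg (sq_nonneg t) (sub_nonneg.2 (hu1.trans hν1))) hu0.le]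
  · nlinarith [mul_le_mul_of_nonneg_left htν ht0.le, mul_pos ht0 hu0]
  · convert hQ.add_mem
      (hQ.algebraMap_mul_mem (c := 2 * t * u) (by positivity)
        (hQ.add_mem (hQ.isSumSq_mul_mem hs hc.1) hm))
      (hQ.algebraMap_mul_mem (sq_nonneg t)
        (hQ.add_mem (hQ.sq_mem (ν - s)) (hQ.algebraMap_mul_mem zero_le_two
          (hQ.isSumSq_mul_mem hs hν.1)))) using 1
    push_cast
    linear_combination (-2 * (t : A) * s) * hcu + (2 * (t : A) * u) * h
  · convert hQ.add_mem (hQ.add_mem (hQ.add_mem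
      (hQ.algebraMap_mul_mem (c := 2 * t) (by positivity) hm)
      (hQ.algebraMap_mul_mem (c := t ^ 2 * (1 + γ)) (by positivity) hν.1))
      (hQ.algebraMap_mul_mem (sq_nonneg t) (hQ.isSumSq_mul_mem hs hγ.1)))
      (hQ.algebraMap_mem (c := t - t ^ 2 * ν * (1 + γ)) (by nlinarith)) using 1
    push_cast
    linear_combination (2 * (t : A) - t ^ 2 * s) * h

theorem mem_or_neg_mem_of_maximal
    (hmax : Maximal (fun P => IsQuadraticModule P ∧ (-1 : A) ∉ P) Q) (harch : IsArchimedean Q)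
    (a : A) : a ∈ Q ∨ -a ∈ Q := by
  obtain ⟨hQ, -⟩ := hmax.prop
  refine or_iff_not_imp_left.2 fun ha => ?_
  have : (-1 : A) ∈ adjoin Q a := by
    by_contra h
    exact ha (hmax.eq_of_subset ⟨isQuadraticModule_adjoin hQ a, h⟩ (subset_adjoin Q a) ▸
      mem_adjoin_self hQ a)
  obtain ⟨q, hq, s, hs, he⟩ := this
  exact mem_of_mul_eq_one_add hQ harch hs hq (by linear_combination he)

theorem exists_isInfinitesimal_sub (hQ : IsQuadraticModule Q) (hQ₁ : (-1 : A) ∉ Q)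
    (harch : IsArchimedean Q) (htot : ∀ a : A, a ∈ Q ∨ -a ∈ Q) (a : A) :
    ∃ r : ℝ, IsInfinitesimal Q (a - r) := by
  set S := {r : ℝ | (r : A) - a ∈ Q}
  obtain ⟨c, hc⟩ := harch a
  have hS : BddBelow S := ⟨-c, fun r hr => by
    have := hQ.nonneg_of_algebraMap_mem hQ₁ (c := r + c)
      (by convert hQ.add_mem hr hc.2 using 1; push_cast; ring)
    linarith⟩
  refine ⟨sInf S, fun ε hε => ⟨?_, ?_⟩⟩
  · obtain ⟨r, hr, hrε⟩ := exists_lt_of_csInf_lt ⟨c, hc.1⟩ (lt_add_of_pos_right (sInf S) hε)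
    convert hQ.add_mem hr (hQ.algebraMap_mem (sub_nonneg.2 hrε.le)) using 1
    push_cast; ring
  · have hε : ((sInf S - ε : ℝ) : A) - a ∉ Q := fun h => by linarith [csInf_le hS h]
    convert (htot _).resolve_left hε using 1
    push_cast; ring

theorem exists_algHom_nonneg (hQ : IsQuadraticModule Q) (hQ₁ : (-1 : A) ∉ Q)
    (harch : IsArchimedean Q) (htot : ∀ a : A, a ∈ Q ∨ -a ∈ Q) :
    ∃ φ : A →ₐ[ℝ] ℝ, ∀ a ∈ Q, 0 ≤ φ a := by
  choose f hf using exists_isInfinitesimal_sub hQ hQ₁ harch htot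
  have hf_eq {a : A} {r : ℝ} (h : IsInfinitesimal Q (a - r)) : f a = r :=
    eq_of_isInfinitesimal_sub hQ hQ₁ (hf a) h
  let φ : A →ₐ[ℝ] ℝ :=
    { toFun := f
      map_one' := hf_eq (by simpa using IsInfinitesimal.zero hQ)
      map_mul' a b := hf_eq <| by
        convert ((hf a).mul hQ (hf b)).add hQ
          (((hf b).algebraMap_mul hQ (f a)).add hQ ((hf a).algebraMap_mul hQ (f b))) using 1
        push_cast; ring
      map_zero' := hf_eq (by simpa using IsInfinitesimal.zero hQ)
      map_add' a b := hf_eq <| by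
        convert (hf a).add hQ (hf b) using 1
        push_cast; ring
      commutes' r := hf_eq (by simpa using IsInfinitesimal.zero hQ) }
  exact ⟨φ, fun a ha => nonneg_of_isInfinitesimal_sub hQ hQ₁ ha (hf a)⟩

theorem mem_of_forall_algHom_pos (hQ : IsQuadraticModule Q) (harch : IsArchimedean Q) {a : A}
    (ha : ∀ φ : A →ₐ[ℝ] ℝ, (∀ q ∈ Q, 0 ≤ φ q) → 0 < φ a) : a ∈ Q := by
  by_contra hna
  have hproper : (-1 : A) ∉ adjoin Q (-a) := by
    rintro ⟨q, hq, s, hs, he⟩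
    exact hna (mem_of_mul_eq_one_add hQ harch hs hq (by linear_combination he))
  obtain ⟨P, hQP, hP⟩ := exists_superset_maximal (isQuadraticModule_adjoin hQ (-a)) hproper
  have harchP := harch.mono ((subset_adjoin Q (-a)).trans hQP)
  obtain ⟨φ, hφ⟩ := exists_algHom_nonneg hP.prop.1 hP.prop.2 harchP
    (mem_or_neg_mem_of_maximal hP harchP)
  have hφa := hφ (-a) (hQP (mem_adjoin_self hQ (-a)))
  rw [map_neg] at hφa
  linarith [ha φ fun q hq => hφ q (hQP (subset_adjoin Q (-a) hq))]

end QuadraticModule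

end RealAlgebra

namespace QuadraticModule

section Generators

variable {R : Type*} [CommRing R] {ι : Type*} [Fintype ι]

def ofGenerators (g : ι → R) : Set R :=
  {p | ∃ (σ₀ : R) (σ : ι → R), IsSumSq σ₀ ∧ (∀ j, IsSumSq (σ j)) ∧ p = σ₀ + ∑ j, σ j * g j}

theorem isQuadraticModule_ofGenerators (g : ι → R) : IsQuadraticModule (ofGenerators g) where
  add_mem := by
    rintro _ _ ⟨σ₀, σ, hσ₀, hσ, rfl⟩ ⟨τ₀, τ, hτ₀, hτ, rfl⟩
    refine ⟨σ₀ + τ₀, σ + τ, hσ₀.add hτ₀, fun j => (hσ j).add (hτ j), ?_⟩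
    simp only [Pi.add_apply, add_mul, Finset.sum_add_distrib]
    ring
  one_mem := ⟨1, 0, .one, fun _ => .zero, by simp⟩
  mul_self_mul_mem := by
    rintro a _ ⟨σ₀, σ, hσ₀, hσ, rfl⟩
    refine ⟨a * a * σ₀, fun j => a * a * σ j, (IsSumSq.mul_self a).mul hσ₀,
      fun j => (IsSumSq.mul_self a).mul (hσ j), ?_⟩
    simp only [mul_add, Finset.mul_sum, mul_assoc]

theorem mem_ofGenerators (g : ι → R) (j : ι) : g j ∈ ofGenerators g := by
  classical
  refine ⟨0, Pi.single j 1, .zero, fun i => ?_, by simp [Pi.single_apply]⟩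
  by_cases h : i = j
  · simp [h, IsSumSq.one]
  · simp [h, IsSumSq.zero]

theorem map_nonneg_of_mem_ofGenerators {S : Type*} [CommRing S] [LinearOrder S]
    [IsStrictOrderedRing S] (φ : R →+* S) {g : ι → R} (hg : ∀ j, 0 ≤ φ (g j)) {p : R}
    (hp : p ∈ ofGenerators g) : 0 ≤ φ p := by
  have hsq {s : R} (hs : IsSumSq s) : 0 ≤ φ s := by
    induction hs with
    | zero => simp
    | sq_add a _ ih => simpa using add_nonneg (mul_self_nonneg (φ a)) ih
  obtain ⟨σ₀, σ, hσ₀, hσ, rfl⟩ := hp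
  simpa using add_nonneg (hsq hσ₀)
    (Finset.sum_nonneg fun j _ => mul_nonneg (hsq (hσ j)) (hg j))

end Generators

variable {σ ι : Type*} [Fintype σ] [Fintype ι] {g : ι → MvPolynomial σ ℝ} {j₀ : ι} {M : ℝ}

theorem isArchimedean_ofGenerators_of_ball (hball : g j₀ = C M - ∑ i, X i ^ 2) :
    IsArchimedean (ofGenerators g) := by
  classical
  have hQ := isQuadraticModule_ofGenerators g
  refine isArchimedean_of_adjoin_eq_top hQ adjoin_range_X ?_
  rintro _ ⟨i, rfl⟩
  have hrest : g j₀ + ∑ l ∈ Finset.univ.erase i, X l ^ 2 ∈ ofGenerators g :=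
    hQ.add_mem (mem_ofGenerators g j₀) (hQ.isSumSq_mem (IsSumSq.sum_sq _ _))
  have hsum := Finset.add_sum_erase Finset.univ (fun l => (X l : MvPolynomial σ ℝ) ^ 2)
    (Finset.mem_univ i)
  have h2 := algebraMap.coe_inv_mul_cancel (A := MvPolynomial σ ℝ) (two_ne_zero : (2 : ℝ) ≠ 0)
  rw [← algebraMap_eq] at hball
  -- `2 ((1 + M) / 2 ∓ Xᵢ) = (Xᵢ ∓ 1)² + g j₀ + ∑_{l ≠ i} X_l²`
  refine ⟨(1 + M) / 2, ?_, ?_⟩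
  · convert hQ.algebraMap_mul_mem (c := 2⁻¹) (by norm_num)
      (hQ.add_mem (hQ.sq_mem (X i - 1)) hrest) using 1
    rw [hball, div_eq_inv_mul]
    push_cast at h2 ⊢
    linear_combination X i * h2 - ((2⁻¹ : ℝ) : MvPolynomial σ ℝ) * hsum
  · convert hQ.algebraMap_mul_mem (c := 2⁻¹) (by norm_num)
      (hQ.add_mem (hQ.sq_mem (X i + 1)) hrest) using 1
    rw [hball, div_eq_inv_mul]
    push_cast at h2 ⊢
    linear_combination -X i * h2 - ((2⁻¹ : ℝ) : MvPolynomial σ ℝ) * hsum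

theorem mem_ofGenerators_of_pos (hball : g j₀ = C M - ∑ i, X i ^ 2) {a : MvPolynomial σ ℝ}
    (ha : ∀ x : σ → ℝ, (∀ j, 0 ≤ eval x (g j)) → 0 < eval x a) : a ∈ ofGenerators g := by
  refine mem_of_forall_algHom_pos (isQuadraticModule_ofGenerators g)
    (isArchimedean_ofGenerators_of_ball hball) fun φ hφ => ?_
  rw [aeval_unique φ, aeval_eq_eval] at hφ ⊢
  exact ha _ fun j => hφ _ (mem_ofGenerators g j)

end QuadraticModule

open QuadraticModule

section Lasserre

variable {n k : ℕ}

theorem isSOS_iff_isSumSq {p : MvPolynomial (Fin n) ℝ} : IsSOS p ↔ IsSumSq p := by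
  constructor
  · rintro ⟨s, q, rfl⟩
    exact IsSumSq.sum_sq _ _
  · intro h
    induction h with
    | zero => exact ⟨0, ![], by simp⟩
    | sq_add a _ ih =>
      obtain ⟨s, q, rfl⟩ := ih
      exact ⟨s + 1, Fin.cons a q, by simp [Fin.sum_univ_succ, sq]⟩

def lasserreValues (r : MvPolynomial (Fin n) ℝ) (g : Fin k → MvPolynomial (Fin n) ℝ) (d : ℕ) :
    Set EReal :=
  {y : EReal | ∃ μ : ℝ, y = (μ : EReal) ∧
    ∃ (σ0 : MvPolynomial (Fin n) ℝ) (σ : Fin k → MvPolynomial (Fin n) ℝ),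
      IsSOS σ0 ∧ (∀ j, IsSOS (σ j)) ∧
      σ0.totalDegree ≤ 2 * d ∧
      (∀ j, (σ j * g j).totalDegree ≤ 2 * d) ∧
      r - C μ = σ0 + ∑ j, σ j * g j}

variable {r : MvPolynomial (Fin n) ℝ} {g : Fin k → MvPolynomial (Fin n) ℝ}

theorem lasserreValues_mono : Monotone (lasserreValues r g) := by
  rintro d e hde _ ⟨μ, rfl, σ0, σ, hσ0, hσ, h0, hdeg, he⟩
  exact ⟨μ, rfl, σ0, σ, hσ0, hσ, h0.trans (by omega), fun j => (hdeg j).trans (by omega), he⟩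

theorem le_eval_of_mem_lasserreValues {d : ℕ} {y : EReal} (hy : y ∈ lasserreValues r g d)
    {x : Fin n → ℝ} (hx : ∀ j, 0 ≤ eval x (g j)) : y ≤ (eval x r : EReal) := by
  obtain ⟨μ, rfl, σ0, σ, hσ0, hσ, -, -, he⟩ := hy
  have := map_nonneg_of_mem_ofGenerators (eval x) hx
    ⟨σ0, σ, isSOS_iff_isSumSq.1 hσ0, fun j => isSOS_iff_isSumSq.1 (hσ j), he⟩
  rw [map_sub, eval_C, sub_nonneg] at this
  exact_mod_cast this

theorem exists_coe_mem_lasserreValues {μ : ℝ} (h : r - C μ ∈ ofGenerators g) :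
    ∃ d, (μ : EReal) ∈ lasserreValues r g d := by
  obtain ⟨σ0, σ, hσ0, hσ, he⟩ := h
  refine ⟨σ0.totalDegree + ∑ j, (σ j * g j).totalDegree, μ, rfl, σ0, σ,
    isSOS_iff_isSumSq.2 hσ0, fun j => isSOS_iff_isSumSq.2 (hσ j), by omega, fun j => ?_, he⟩
  have := Finset.single_le_sum (fun j _ => Nat.zero_le ((σ j * g j).totalDegree))
    (Finset.mem_univ j)
  omega

end Lasserre

theorem lasserre_dense_convergence_general
    (n k : ℕ) (r : MvPolynomial (Fin n) ℝ) (g : Fin k → MvPolynomial (Fin n) ℝ)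
    (K : Set (Fin n → ℝ))
    (hK : K = {x | ∀ j, 0 ≤ eval x (g j)})
    (j₀ : Fin k) (M : ℝ)
    (hball : g j₀ = C M - ∑ i, X i ^ 2)
    (p : ℕ → EReal)
    (hp : ∀ d : ℕ, p d = sSup {y : EReal | ∃ μ : ℝ, y = (μ : EReal) ∧
        ∃ (σ0 : MvPolynomial (Fin n) ℝ) (σ : Fin k → MvPolynomial (Fin n) ℝ),
          IsSOS σ0 ∧ (∀ j, IsSOS (σ j)) ∧
          σ0.totalDegree ≤ 2 * d ∧
          (∀ j, (σ j * g j).totalDegree ≤ 2 * d) ∧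
          r - C μ = σ0 + ∑ j, σ j * g j})
    (rstar : EReal)
    (hrstar : rstar = sInf {y : EReal | ∃ x ∈ K, y = ((eval x r : ℝ) : EReal)}) :
    Monotone p ∧ Tendsto p atTop (nhds rstar) := by
  obtain rfl : p = fun d => sSup (lasserreValues r g d) := funext hp
  subst hK
  have hmono : Monotone fun d => sSup (lasserreValues r g d) := fun d e hde =>
    sSup_le_sSup (lasserreValues_mono hde)
  have hupper (d : ℕ) : sSup (lasserreValues r g d) ≤ rstar := by
    rw [hrstar]
    refine sSup_le fun y hy => le_sInf ?_
    rintro _ ⟨x, hx, rfl⟩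
    exact le_eval_of_mem_lasserreValues hy hx
  have hlower : rstar ≤ ⨆ d, sSup (lasserreValues r g d) := by
    refine EReal.ge_of_forall_gt_iff_ge.1 fun μ hμ => ?_
    rw [hrstar] at hμ
    have hpos (x : Fin n → ℝ) (hx : ∀ j, 0 ≤ eval x (g j)) : 0 < eval x (r - C μ) := by
      have := EReal.coe_lt_coe_iff.1 (hμ.trans_le (sInf_le ⟨x, hx, rfl⟩))
      rwa [map_sub, eval_C, sub_pos]
    obtain ⟨d, hd⟩ := exists_coe_mem_lasserreValues (mem_ofGenerators_of_pos hball hpos)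
    exact (le_sSup hd).trans (le_iSup (fun d => sSup (lasserreValues r g d)) d)
  exact ⟨hmono, le_antisymm (iSup_le hupper) hlower ▸ tendsto_atTop_iSup hmono⟩

/-- Convergence of the dense Lasserre hierarchy under the ball (Archimedean) constraint. -/
theorem lasserre_dense_convergence
    (n k : ℕ) (r : MvPolynomial (Fin n) ℝ) (g : Fin k → MvPolynomial (Fin n) ℝ)
    (K : Set (Fin n → ℝ))
    (hK : K = {x | ∀ j, 0 ≤ eval x (g j)})
    (hKne : K.Nonempty)
    (j₀ : Fin k) (M : ℝ) (hM : 0 < M)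
    (hball : g j₀ = C M - ∑ i, X i ^ 2)
    (p : ℕ → EReal)
    (hp : ∀ d : ℕ, p d = sSup {y : EReal | ∃ μ : ℝ, y = (μ : EReal) ∧
        ∃ (σ0 : MvPolynomial (Fin n) ℝ) (σ : Fin k → MvPolynomial (Fin n) ℝ),
          IsSOS σ0 ∧ (∀ j, IsSOS (σ j)) ∧
          σ0.totalDegree ≤ 2 * d ∧
          (∀ j, (σ j * g j).totalDegree ≤ 2 * d) ∧
          r - C μ = σ0 + ∑ j, σ j * g j})
    (rstar : EReal)
    (hrstar : rstar = sInf {y : EReal | ∃ x ∈ K, y = ((eval x r : ℝ) : EReal)}) :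
    Monotone p ∧ Tendsto p atTop (nhds rstar) :=
  lasserre_dense_convergence_general n k r g K hK j₀ M hball p hp rstar hrstar
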